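/- Every equicontinuous transitive non-autonomous system is chain transitive. -/
import Mathlib


open Filter

/-- The composition `F_{[j, j+n-1]} = f_{j+n-1} ∘ ⋯ ∘ f_j` (`n` maps starting at index `j`). -/
def seg {X : Type*} (f : ℕ → X → X) (j : ℕ) : ℕ → X → X
  | 0 => id
  | n + 1 => f (j + n) ∘ seg f j n

/-- Equicontinuity of the family `(f_i)`. -/
def Equicont {X : Type*} [MetricSpace X] (f : ℕ → X → X) : Prop :=
  ∀ ε > (0:ℝ), ∃ δ > (0:ℝ), ∀ x y : X, dist x y < δ → ∀ i : ℕ, dist (f i x) (f i y) < ε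

/-- Transitivity of a non-autonomous system. -/
def TransitiveNAS {X : Type*} [MetricSpace X] (f : ℕ → X → X) : Prop :=
  ∀ U V : Set X, IsOpen U → IsOpen V → U.Nonempty → V.Nonempty →
    ∃ n : ℕ, 0 < n ∧ ∀ i : ℕ, 1 ≤ i → ((seg f i n '' U) ∩ V).Nonempty

/-- `x R_δ y`: there is `n` such that for each `j` there is a `δ`-chain of length `n`
from `x` to `y` starting at time `j`. -/
def ChainRel {X : Type*} [MetricSpace X] (f : ℕ → X → X) (δ : ℝ) (x y : X) : Prop :=
  ∃ n : ℕ, 0 < n ∧ ∀ j : ℕ, 1 ≤ j → ∃ ch : ℕ → X, ch 0 = x ∧ ch n = y ∧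
    ∀ i < n, dist (f (j + i) (ch i)) (ch (i + 1)) < δ

/-- Chain transitivity of a non-autonomous system. -/
def ChainTransitiveNAS {X : Type*} [MetricSpace X] (f : ℕ → X → X) : Prop :=
  ∀ δ > (0:ℝ), ∀ x y : X, ChainRel f δ x y ∧ ChainRel f δ y x

lemma chainRel_aux {X : Type*} [MetricSpace X] (f : ℕ → X → X)
    (hequi : Equicont f) (htrans : TransitiveNAS f) :
    ∀ δ > (0:ℝ), ∀ x y : X, ChainRel f δ x y := by
  intro δ hδ x y
  obtain ⟨δ', hδ'pos, hδ'⟩ := hequi (δ/2) (by linarith)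
  obtain ⟨n, hn, hseg⟩ := htrans (Metric.ball x δ') (Metric.ball y (δ/2))
    Metric.isOpen_ball Metric.isOpen_ball
    ⟨x, Metric.mem_ball_self hδ'pos⟩ ⟨y, Metric.mem_ball_self (by linarith)⟩
  refine ⟨n, hn, ?_⟩
  intro j hj
  obtain ⟨w, ⟨u, hu, hw⟩, hwV⟩ := hseg j hj
  rw [Metric.mem_ball] at hu hwV
  have hwy : dist (seg f j n u) y < δ/2 := by rw [hw]; exact hwV
  have hxu : dist x u < δ' := by rw [dist_comm]; exact hu
  refine ⟨fun i => if i = 0 then x else if i = n then y else seg f j i u, by simp, ?_, ?_⟩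
  · show (if n = 0 then x else if n = n then y else seg f j n u) = y
    rw [if_neg (Nat.pos_iff_ne_zero.mp hn), if_pos rfl]
  · intro i hi
    have hstep : ∀ k, seg f j (k+1) u = f (j + k) (seg f j k u) := fun k => rfl
    show dist (f (j + i) (if i = 0 then x else if i = n then y else seg f j i u))
        (if i + 1 = 0 then x else if i + 1 = n then y else seg f j (i+1) u) < δ
    rw [if_neg (Nat.succ_ne_zero i)]
    by_cases h0 : i = 0
    · subst h0
      rw [if_pos rfl]
      by_cases h1 : 0 + 1 = n
      · rw [if_pos h1]
        have huy : dist (f (j + 0) u) y < δ/2 := by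
          have := hwy; rw [← h1] at this
          simpa [seg] using this
        calc dist (f (j + 0) x) y ≤ dist (f (j+0) x) (f (j+0) u) + dist (f (j+0) u) y :=
              dist_triangle _ _ _
          _ < δ/2 + δ/2 := add_lt_add (hδ' x u hxu (j+0)) huy
          _ = δ := by ring
      · rw [if_neg h1]
        have : seg f j (0+1) u = f (j + 0) u := rfl
        rw [this]
        calc dist (f (j+0) x) (f (j+0) u) < δ/2 := hδ' x u hxu (j+0)
          _ < δ := by linarith
    · have hin : i ≠ n := Nat.ne_of_lt hi
      rw [if_neg h0, if_neg hin]
      by_cases h1 : i + 1 = n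
      · rw [if_pos h1]
        have : f (j + i) (seg f j i u) = seg f j n u := by rw [← hstep, h1]
        rw [this]
        linarith
      · rw [if_neg h1, ← hstep]
        simpa using hδ

theorem stmt8 {X : Type*} [MetricSpace X] (f : ℕ → X → X)
    (hf : ∀ i, Continuous (f i)) (hequi : Equicont f) (htrans : TransitiveNAS f) :
    ChainTransitiveNAS f := by
  intro δ hδ x y
  exact ⟨chainRel_aux f hequi htrans δ hδ x y, chainRel_aux f hequi htrans δ hδ y x⟩
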